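/- Let S be a uniformly random subset of size s of a totally ordered multiset S₊ of size s₊. Let y*₁ ≤ … ≤ y*ₛ and z*₁ ≤ … ≤ z*_{s₊} be the sorted elements of S and S₊ respectively. Fix θ ∈ [0,1], g ≥ 0, set i_u := max{⌈θs − g⌉, 1} and j_u := max{⌈θs₊ − 2g·s₊/s⌉, 1}. Then P[y*_{i_u} < z*_{j_u}] ≤ exp(−2g²/s). -/

import Mathlib

/-- The `i`-th smallest element (1-based) of a multiset of reals. -/
noncomputable def kthSmallest (M : Multiset ℝ) (i : ℕ) : ℝ :=
  (M.sort (· ≤ ·)).getD (i - 1) 0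

/-!
Let `A` be the set of indices of the elements of `S₊` lying below `z = z*_{j_u}`; since `z` is not
below itself, `|A| < j_u`. The event `y*_{i_u} < z` says that the sample meets `A` in at least
`i_u` points, while `X = |A ∩ S|` is hypergeometric with mean `s|A|/s₊ ≤ i_u - g`. Drawing the
sample one element at a time, `λ^X` and the number `|A \ S|` of unsampled points of `A` are
negatively correlated, which gives Hoeffding's comparison `E[λ^X] ≤ (1 - p + pλ)^s` with
`p = |A|/s₊`; Hoeffding's lemma and Markov's inequality with `λ = exp(4g/s)` then finish.
-/

open Finset Real MeasureTheory ProbabilityTheory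

theorem List.Pairwise.getElem_lt_iff_lt_countP {α : Type*} [LinearOrder α] {l : List α}
    (hl : l.Pairwise (· ≤ ·)) {i : ℕ} (hi : i < l.length) (z : α) :
    l[i] < z ↔ i < l.countP (· < z) := by
  have hdrop : l.drop i = l[i] :: l.drop (i + 1) := List.drop_eq_getElem_cons hi
  have hle_drop : ∀ a ∈ l.drop i, l[i] ≤ a := by
    have := hdrop ▸ hl.drop (i := i)
    intro a ha
    rw [hdrop, List.mem_cons] at ha
    rcases ha with rfl | ha
    · exact le_rfl
    · exact List.rel_of_pairwise_cons this ha
  have hmem : l[i] ∈ l.drop i := hdrop ▸ List.mem_cons_self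
  have htake : (l.take i).length = i := by simp [hi.le]
  have hsplit : l.countP (· < z) = (l.take i).countP (· < z) + (l.drop i).countP (· < z) := by
    rw [← List.countP_append, List.take_append_drop]
  rw [hsplit]
  constructor
  · intro h
    have htake_all : (l.take i).countP (· < z) = i := by
      rw [List.countP_eq_length.2 fun a ha =>
        decide_eq_true ((hl.rel_of_mem_take_of_mem_drop ha hmem).trans_lt h), htake]
    have hdrop_pos : 0 < (l.drop i).countP (· < z) := List.countP_pos_iff.2 ⟨_, hmem, by simpa⟩
    omega
  · intro h
    by_contra! hz
    have htake_le : (l.take i).countP (· < z) ≤ i := List.countP_le_length.trans htake.le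
    have hdrop_zero : (l.drop i).countP (· < z) = 0 := List.countP_eq_zero.2 fun a ha => by
      simpa using hz.trans (hle_drop a ha)
    omega

theorem kthSmallest_lt_iff {M : Multiset ℝ} {i : ℕ} (hi : 1 ≤ i) (hiM : i ≤ M.card) (z : ℝ) :
    kthSmallest M i < z ↔ i ≤ M.countP (· < z) := by
  have hlen : i - 1 < (M.sort (· ≤ ·)).length := by rw [Multiset.length_sort]; omega
  rw [kthSmallest, List.getD_eq_getElem _ _ hlen,
    (M.pairwise_sort (· ≤ ·)).getElem_lt_iff_lt_countP hlen, ← Multiset.coe_countP,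
    Multiset.sort_eq]
  omega

theorem kthSmallest_map_lt_iff {ι : Type*} (S : Finset ι) (x : ι → ℝ) {i : ℕ} (hi : 1 ≤ i)
    (hiS : i ≤ #S) (z : ℝ) :
    kthSmallest (S.val.map x) i < z ↔ i ≤ #{j ∈ S | x j < z} := by
  rw [kthSmallest_lt_iff hi (by simpa using hiS), Multiset.countP_map, card_def, filter_val]

theorem one_sub_add_mul_exp_le {p : ℝ} (hp0 : 0 ≤ p) (hp1 : p ≤ 1) (t : ℝ) :
    1 - p + p * exp t ≤ exp (p * t + t ^ 2 / 8) := by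
  let X : Bool → ℝ := fun b => if b then 1 else 0
  have hmgf := (hasSubgaussianMGF_of_mem_Icc (μ := Ber(true, false, ⟨p, hp0, hp1⟩)) (a := 0)
    (b := 1) (Measurable.of_discrete (f := X)).aemeasurable
    (ae_of_all _ fun b => by cases b <;> simp [X])).mgf_le t
  norm_num [mgf, integral_bernoulliMeasure, X] at hmgf
  have hone : exp (p * t) * exp (t * (1 - p)) = exp t := by rw [← exp_add]; ring_nf
  have hzero : exp (p * t) * exp (-(t * p)) = 1 := by rw [← exp_add]; ring_nf; exact exp_zero
  calc 1 - p + p * exp t = exp (p * t) * (p * exp (t * (1 - p)) + (1 - p) * exp (-(t * p))) := by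
        linear_combination (-p) * hone - (1 - p) * hzero
    _ ≤ exp (p * t) * exp (1 / 4 * t ^ 2 / 2) := by gcongr
    _ = exp (p * t + t ^ 2 / 8) := by rw [← exp_add]; ring_nf

section Sampling

variable {α : Type*} [Fintype α] [DecidableEq α]

theorem sum_powersetCard_succ_nsmul {β : Type*} [AddCommMonoid β] (f : Finset α → β) (s : ℕ) :
    (s + 1) • ∑ T ∈ powersetCard (s + 1) univ, f T
      = ∑ S ∈ powersetCard s univ, ∑ i ∈ Sᶜ, f (insert i S) := by
  have hT : ∀ T ∈ powersetCard (s + 1) univ, (s + 1) • f T = ∑ i ∈ T, f (insert i (T.erase i)) :=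
    fun T hT => by
      rw [sum_congr rfl fun i hi => by rw [insert_erase hi], sum_const,
        (mem_powersetCard_univ.1 hT)]
  rw [smul_sum, sum_congr rfl hT, sum_sigma', sum_sigma']
  refine sum_nbij' (fun p => ⟨p.1.erase p.2, p.2⟩) (fun p => ⟨insert p.2 p.1, p.2⟩) ?_ ?_ ?_ ?_
    (fun _ _ => rfl)
  · rintro ⟨T, i⟩ h
    simp only [mem_sigma, mem_powersetCard_univ] at h ⊢
    simp [card_erase_of_mem h.2, h.1]
  · rintro ⟨S, i⟩ h
    simp only [mem_sigma, mem_powersetCard_univ, mem_compl] at h ⊢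
    simp [card_insert_of_notMem h.2, h.1]
  · rintro ⟨T, i⟩ h
    simp only [mem_sigma] at h
    simp [insert_erase h.2]
  · rintro ⟨S, i⟩ h
    simp only [mem_sigma, mem_compl] at h
    simp [erase_insert h.2]

theorem sum_compl_pow_card_inter_insert (A S : Finset α) (l : ℝ) :
    ∑ i ∈ Sᶜ, l ^ #(A ∩ insert i S)
      = l ^ #(A ∩ S) * ((Fintype.card α - #S) + (l - 1) * #(A \ S)) := by
  have hi : ∀ i ∈ Sᶜ,
      l ^ #(A ∩ insert i S) = l ^ #(A ∩ S) * (1 + (l - 1) * if i ∈ A then 1 else 0) := by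
    intro i hiS
    have hiS : i ∉ A ∩ S := fun h => mem_compl.1 hiS (mem_inter.1 h).2
    by_cases hiA : i ∈ A
    · simp [inter_insert_of_mem hiA, card_insert_of_notMem hiS, hiA, pow_succ]
    · simp [inter_insert_of_notMem hiA, hiA]
  have hAS : ({i ∈ Sᶜ | i ∈ A} : Finset α) = A \ S := by ext; simp [and_comm]
  rw [sum_congr rfl hi, ← mul_sum, sum_add_distrib, ← mul_sum, sum_boole, hAS, sum_const,
    card_compl, nsmul_one, Nat.cast_sub (card_le_univ S)]

theorem succ_mul_sum_pow_card_inter (A : Finset α) (l : ℝ) (s : ℕ) :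
    (s + 1) * ∑ T ∈ powersetCard (s + 1) univ, l ^ #(A ∩ T)
      = ∑ S ∈ powersetCard s univ,
          l ^ #(A ∩ S) * ((Fintype.card α - s) + (l - 1) * #(A \ S)) := by
  rw [← Nat.cast_succ, ← nsmul_eq_mul, sum_powersetCard_succ_nsmul]
  refine sum_congr rfl fun S hS => ?_
  rw [sum_compl_pow_card_inter_insert, (mem_powersetCard_univ.1 hS)]

theorem card_mul_sum_card_inter_powersetCard (A : Finset α) (s : ℕ) :
    Fintype.card α * ∑ S ∈ powersetCard s univ, #(A ∩ S) = #A * s * (Fintype.card α).choose s := by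
  rcases s with _ | k
  · simp
  have hmem : ∀ a ∈ A,
      #{S ∈ powersetCard (k + 1) univ | a ∈ S} = (Fintype.card α - 1).choose k := by
    intro a _
    simpa using card_filter_powersetCard_subset {a} univ (k + 1) (subset_univ _) (by simp)
  rw [sum_card_inter hmem]
  rcases h : Fintype.card α with _ | n
  · simp
  rw [Nat.add_sub_cancel, mul_left_comm, Nat.add_one_mul_choose_eq]
  ring

theorem card_mul_sum_pow_card_inter_mul_card_sdiff_le (A : Finset α) {l : ℝ} (hl : 1 ≤ l)
    (s : ℕ) :
    Fintype.card α * ∑ S ∈ powersetCard s univ, l ^ #(A ∩ S) * #(A \ S)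
      ≤ #A * (Fintype.card α - s) * ∑ S ∈ powersetCard s univ, l ^ #(A ∩ S) := by
  rcases lt_or_ge (Fintype.card α) s with hs | hs
  · simp [powersetCard_eq_empty.2 (by rwa [card_univ] : #(univ : Finset α) < s)]
  set P := powersetCard s (univ : Finset α)
  have hsdiff : ∀ S, (#(A \ S) : ℝ) = #A - #(A ∩ S) := fun S => by
    rw [eq_sub_iff_add_eq, ← Nat.cast_add, card_sdiff_add_card_inter]
  -- `l ^ X` and `X` are both increasing in `X = #(A ∩ S)`, so they are positively correlated
  have hcorr : (∑ S ∈ P, l ^ #(A ∩ S)) * ∑ S ∈ P, (#(A ∩ S) : ℝ)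
      ≤ #P * ∑ S ∈ P, l ^ #(A ∩ S) * #(A ∩ S) :=
    MonovaryOn.sum_mul_sum_le_card_mul_sum fun S _ T _ h =>
      pow_le_pow_right₀ hl (by exact_mod_cast h.le)
  have hmean : (Fintype.card α : ℝ) * ∑ S ∈ P, (#(A ∩ S) : ℝ) = #A * s * #P := by
    rw [card_powersetCard, card_univ]
    exact_mod_cast card_mul_sum_card_inter_powersetCard A s
  have hP : (0 : ℝ) < #P := by
    rw [card_powersetCard, card_univ]; exact_mod_cast Nat.choose_pos hs
  simp only [hsdiff, mul_sub, sum_sub_distrib, ← sum_mul]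
  refine le_of_mul_le_mul_left ?_ hP
  linear_combination (Fintype.card α : ℝ) * hcorr - (∑ S ∈ P, l ^ #(A ∩ S)) * hmean

theorem sum_powersetCard_pow_card_inter_le (A : Finset α) {l : ℝ} (hl : 1 ≤ l) (s : ℕ) :
    ∑ S ∈ powersetCard s univ, l ^ #(A ∩ S)
      ≤ (Fintype.card α).choose s * (1 + (l - 1) * #A / Fintype.card α) ^ s := by
  set N := Fintype.card α
  set Q := 1 + (l - 1) * #A / N
  have hQ : 0 ≤ Q := by positivity
  induction s with
  | zero => simp
  | succ s ih =>
    rcases le_or_gt N s with hs | hs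
    · rw [powersetCard_eq_empty.2 (by rw [card_univ]; omega), sum_empty]
      positivity
    have hN : (0 : ℝ) < N := by exact_mod_cast (Nat.zero_le s).trans_lt hs
    have hNQ : N * Q = N + (l - 1) * #A := by simp only [Q]; field_simp
    have hchoose : ((s : ℝ) + 1) * N.choose (s + 1) = (N - s) * N.choose s := by
      rw [← Nat.cast_sub hs.le, mul_comm, mul_comm ((N - s : ℕ) : ℝ)]
      exact_mod_cast Nat.choose_succ_right_eq N s
    set Φ := ∑ S ∈ powersetCard s univ, l ^ #(A ∩ S)
    set W := ∑ S ∈ powersetCard s univ, l ^ #(A ∩ S) * #(A \ S)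
    have hstep : ((s : ℝ) + 1) * ∑ T ∈ powersetCard (s + 1) univ, l ^ #(A ∩ T)
        = (N - s) * Φ + (l - 1) * W := by
      rw [succ_mul_sum_pow_card_inter, mul_sum, mul_sum, ← sum_add_distrib]
      exact sum_congr rfl fun S _ => by ring
    have hcorr : N * W ≤ #A * (N - s) * Φ := card_mul_sum_pow_card_inter_mul_card_sdiff_le A hl s
    have hsN : (0 : ℝ) ≤ N - s := by rw [sub_nonneg]; exact_mod_cast hs.le
    refine le_of_mul_le_mul_left ?_ (by positivity : (0 : ℝ) < (s + 1) * N)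
    calc ((s : ℝ) + 1) * N * ∑ T ∈ powersetCard (s + 1) univ, l ^ #(A ∩ T)
        = N * (N - s) * Φ + (l - 1) * (N * W) := by linear_combination (N : ℝ) * hstep
      _ ≤ N * (N - s) * Φ + (l - 1) * (#A * (N - s) * Φ) := by gcongr
      _ = (N - s) * (N * Q) * Φ := by rw [hNQ]; ring
      _ ≤ (N - s) * (N * Q) * (N.choose s * Q ^ s) := by gcongr
      _ = (s + 1) * N * (N.choose (s + 1) * Q ^ (s + 1)) := by
        linear_combination (-(N : ℝ) * Q ^ (s + 1)) * hchoose

theorem card_filter_le_card_inter_le (A : Finset α) {s a : ℕ} {g : ℝ} (hg : 0 ≤ g)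
    (ha : s * #A / Fintype.card α + g ≤ a) :
    (#{S ∈ powersetCard s univ | a ≤ #(A ∩ S)} : ℝ)
      ≤ (Fintype.card α).choose s * exp (-2 * g ^ 2 / s) := by
  set N := Fintype.card α
  set p : ℝ := #A / N
  set t : ℝ := 4 * g / s
  have hp0 : 0 ≤ p := by positivity
  have hp1 : p ≤ 1 := div_le_one_of_le₀ (by exact_mod_cast card_le_univ A) (Nat.cast_nonneg _)
  have hl : 1 ≤ exp t := one_le_exp (by positivity)
  have hmarkov : (#{S ∈ powersetCard s univ | a ≤ #(A ∩ S)} : ℝ) * exp t ^ a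
      ≤ ∑ S ∈ powersetCard s univ, exp t ^ #(A ∩ S) := by
    rw [← nsmul_eq_mul]
    refine (card_nsmul_le_sum _ _ _ fun S hS => ?_).trans
      (sum_le_sum_of_subset_of_nonneg (filter_subset _ _) fun _ _ _ => by positivity)
    exact pow_le_pow_right₀ hl (mem_filter.1 hS).2
  have hmgf := sum_powersetCard_pow_card_inter_le A hl s
  have hQ : 1 + (exp t - 1) * #A / N ≤ exp (p * t + t ^ 2 / 8) := by
    convert one_sub_add_mul_exp_le hp0 hp1 t using 1; simp only [p]; ring
  have hexp : s * (p * t + t ^ 2 / 8) ≤ -2 * g ^ 2 / s + a * t := by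
    rcases Nat.eq_zero_or_pos s with rfl | hs
    · simp [t]
    have hsp : s * p + g ≤ a := by simpa only [p, mul_div_assoc] using ha
    have hvar : s * (t ^ 2 / 8) = -2 * g ^ 2 / s + g * t := by
      simp only [t]; field_simp; ring
    nlinarith [mul_le_mul_of_nonneg_right hsp (by positivity : 0 ≤ t)]
  refine le_of_mul_le_mul_right ?_ (pow_pos (exp_pos t) a)
  calc (#{S ∈ powersetCard s univ | a ≤ #(A ∩ S)} : ℝ) * exp t ^ a
      ≤ N.choose s * (1 + (exp t - 1) * #A / N) ^ s := hmarkov.trans hmgf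
    _ ≤ N.choose s * exp (p * t + t ^ 2 / 8) ^ s := by
      have : 0 ≤ exp t - 1 := sub_nonneg.2 hl
      gcongr
    _ = N.choose s * exp (s * (p * t + t ^ 2 / 8)) := by rw [← exp_nat_mul]
    _ ≤ N.choose s * exp (-2 * g ^ 2 / s + a * t) := by gcongr
    _ = N.choose s * exp (-2 * g ^ 2 / s) * exp t ^ a := by
      rw [exp_add, ← exp_nat_mul, mul_comm (a : ℝ), mul_assoc]

end Sampling

theorem mem_Icc_of_natCast_eq_max_ceil {n m : ℕ} {r : ℝ} (h : (n : ℤ) = max ⌈r⌉ 1)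
    (hr : r ≤ m) (hm : 1 ≤ m) : n ∈ Set.Icc 1 m := by
  have : ⌈r⌉ ≤ m := Int.ceil_le.2 (by exact_mod_cast hr)
  constructor <;> omega

theorem mul_div_add_le_of_lt_rank {s N K iu ju : ℕ} {θ g : ℝ} (hs : 0 < s) (hN : 0 < N)
    (hiu : (iu : ℤ) = max ⌈θ * s - g⌉ 1) (hju : (ju : ℤ) = max ⌈θ * N - 2 * g * N / s⌉ 1)
    (hK : 0 < K) (hKju : K < ju) :
    s * K / N + g ≤ iu := by
  have hju' : (ju : ℤ) = ⌈θ * N - 2 * g * N / s⌉ := by omega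
  have hK' : (K : ℝ) ≤ θ * N - 2 * g * N / s := by
    have hKju' : (K : ℝ) + 1 ≤ ju := by exact_mod_cast hKju
    have hceil : (ju : ℝ) < θ * N - 2 * g * N / s + 1 := by
      exact_mod_cast hju' ▸ Int.ceil_lt_add_one (θ * N - 2 * g * N / s)
    linarith
  have hiu' : θ * s - g ≤ iu :=
    (Int.le_ceil _).trans (by exact_mod_cast (hiu ▸ le_max_left _ _ : ⌈θ * s - g⌉ ≤ (iu : ℤ)))
  calc s * K / N + g ≤ s * (θ * N - 2 * g * N / s) / N + g := by gcongr
    _ = θ * s - g := by field_simp; ring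
    _ ≤ iu := hiu'

/-- If `S` is a uniformly random `s`-subset of the `s₊`-element multiset `S₊`,
`i_u = max{⌈θs − g⌉, 1}` and `j_u = max{⌈θs₊ − 2g·s₊/s⌉, 1}`, then
`P[y*_{i_u} < z*_{j_u}] ≤ exp(−2g²/s)`. -/
theorem sample_rank_lower_prob (s splus : ℕ) (hs : 0 < s) (hss : s ≤ splus)
    (x : Fin splus → ℝ) (θ g : ℝ) (hθ : θ ∈ Set.Icc (0 : ℝ) 1) (hg : 0 ≤ g)
    (iu ju : ℕ) (hiu : (iu : ℤ) = max ⌈θ * (s : ℝ) - g⌉ 1)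
    (hju : (ju : ℤ) = max ⌈θ * (splus : ℝ) - 2 * g * (splus : ℝ) / (s : ℝ)⌉ 1) :
    ((((Finset.univ : Finset (Fin splus)).powersetCard s).filter
        (fun S : Finset (Fin splus) =>
          kthSmallest (S.val.map x) iu
            < kthSmallest ((Finset.univ : Finset (Fin splus)).val.map x) ju)).card : ℝ)
      / ((((Finset.univ : Finset (Fin splus)).powersetCard s)).card : ℝ)
      ≤ Real.exp (-2 * g ^ 2 / (s : ℝ)) := by
  have hN : 0 < splus := hs.trans_le hss
  obtain ⟨hiu1, hius⟩ := mem_Icc_of_natCast_eq_max_ceil hiu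
    (by nlinarith [hθ.2] : θ * s - g ≤ s) hs
  obtain ⟨hju1, hjuN⟩ := mem_Icc_of_natCast_eq_max_ceil hju
    (by have : 0 ≤ 2 * g * splus / s := by positivity
        nlinarith [hθ.2] : θ * splus - 2 * g * splus / s ≤ splus) hN
  set z := kthSmallest ((univ : Finset (Fin splus)).val.map x) ju
  set A : Finset (Fin splus) := {j | x j < z}
  have hrank : ∀ (S : Finset (Fin splus)) {i : ℕ}, 1 ≤ i → i ≤ #S →
      (kthSmallest (S.val.map x) i < z ↔ i ≤ #(A ∩ S)) := fun S i hi hiS => by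
    rw [kthSmallest_map_lt_iff S x hi hiS]
    congr! 2; ext; simp [A, and_comm]
  have hAju : #A < ju := by
    by_contra! h
    exact lt_irrefl z <| (hrank univ hju1 (by simpa using hjuN)).2 (by simpa using h)
  rw [filter_congr fun S hS => hrank S hiu1 ((mem_powersetCard_univ.1 hS).symm ▸ hius),
    card_powersetCard, card_univ, Fintype.card_fin, div_le_iff₀ (by exact_mod_cast Nat.choose_pos hss), mul_comm]
  rcases Nat.eq_zero_or_pos #A with hA | hA
  · rw [filter_false_of_mem fun S _ => by
      have : #(A ∩ S) ≤ #A := card_le_card inter_subset_left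
      omega]
    simp only [card_empty, Nat.cast_zero]
    positivity
  simpa using card_filter_le_card_inter_le A hg
    (by simpa using mul_div_add_le_of_lt_rank hs hN hiu hju hA hAju)
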